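/- arXiv:1507.02463 — 5 statements merged into one kernel-verified Lean document; each statement's English description precedes it below -/
import Mathlib

section
/- Let n, k, r, p be positive integers with r dividing n, 1 < p ≤ r, and p ≤ k ≤ n. For a balanced r-coloring χ of an n-element vertex set V, the number of k-element subsets of V that are properly (r,p) colored by χ (i.e., on which χ takes at least p distinct values) equals C(n,k) − Σ_{i=1}^{p−1} m(n,k,r,i), where m(n,k,r,i) = C(r,i) · Σ_{j=0}^{i} (-1)^j · C(i,j) · C((n/r)·(i−j), k), and C(a,b) denotes the binomial coefficient (with C(a,b) = 0 when a < b). -/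
open Finset
open Finset

lemma aux_empty {α : Type*} [DecidableEq α] (D : Finset α) :
    ∑ W ∈ D.powerset, (-1:ℤ)^(D.card - W.card) = if D = ∅ then 1 else 0 := by
  have : ∀ W ∈ D.powerset, (-1:ℤ)^(D.card - W.card) = (-1)^D.card * (-1)^W.card := by
    intro W hW
    have hle : W.card ≤ D.card := card_le_card (mem_powerset.mp hW)
    have : (-1:ℤ)^(D.card - W.card) * (-1)^W.card = (-1)^D.card := by
      rw [← pow_add, Nat.sub_add_cancel hle]
    calc (-1:ℤ)^(D.card - W.card) = (-1:ℤ)^(D.card - W.card) * ((-1)^W.card * (-1)^W.card) := by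
          rw [← pow_add, ← two_mul, pow_mul]; norm_num
      _ = (-1)^D.card * (-1)^W.card := by rw [← mul_assoc, this]
  rw [Finset.sum_congr rfl this, ← Finset.mul_sum, Finset.sum_powerset_neg_one_pow_card]
  split_ifs with h
  · subst h; simp
  · simp

lemma aux_inner {α : Type*} [DecidableEq α] (S U : Finset α) (hU : U ⊆ S) :
    ∑ T ∈ S.powerset.filter (fun T => U ⊆ T), (-1:ℤ)^(S.card - T.card)
      = if U = S then 1 else 0 := by
  have heq : (S \ U = ∅) ↔ (U = S) := by
    constructor
    · intro h
      refine Finset.Subset.antisymm hU ?_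
      intro x hx
      by_contra hxU
      exact absurd (Finset.mem_sdiff.mpr ⟨hx, hxU⟩) (by simp [h])
    · intro h; subst h; simp
  have := aux_empty (S \ U)
  rw [if_congr heq rfl rfl] at this
  rw [← this]
  apply Finset.sum_nbij' (fun T => T \ U) (fun W => W ∪ U)
  · intro T hT
    simp only [mem_filter, mem_powerset] at hT
    exact mem_powerset.mpr (Finset.sdiff_subset_sdiff hT.1 le_rfl)
  · intro W hW
    simp only [mem_powerset] at hW
    simp only [mem_filter, mem_powerset]
    constructor
    · exact Finset.union_subset (hW.trans (Finset.sdiff_subset)) hU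
    · exact Finset.subset_union_right
  · intro T hT
    simp only [mem_filter, mem_powerset] at hT
    exact Finset.sdiff_union_of_subset hT.2
  · intro W hW
    simp only [mem_powerset] at hW
    have : Disjoint W U := Finset.disjoint_of_subset_left hW Finset.sdiff_disjoint
    rw [Finset.union_sdiff_cancel_right this]
  · intro T hT
    simp only [mem_filter, mem_powerset] at hT
    congr 1
    have h1 := Finset.card_sdiff_of_subset hT.2
    have h2 := Finset.card_sdiff_of_subset hU
    have h3 := Finset.card_le_card hT.2
    have h4 := Finset.card_le_card hT.1
    have h5 : U.card ≤ S.card := Finset.card_le_card hU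
    omega

lemma aux_mobius {α : Type*} [DecidableEq α] (g : Finset α → ℤ) (S : Finset α) :
    ∑ T ∈ S.powerset, (-1:ℤ)^(S.card - T.card) * (∑ U ∈ T.powerset, g U) = g S := by
  simp_rw [Finset.mul_sum]
  rw [Finset.sum_comm' (t' := S.powerset)
      (s' := fun U => S.powerset.filter (fun T => U ⊆ T))
      (fun T U => by
        simp only [mem_powerset, mem_filter]
        constructor
        · rintro ⟨h1, h2⟩; exact ⟨⟨h1, h2⟩, h2.trans h1⟩
        · rintro ⟨⟨h1, h2⟩, h3⟩; exact ⟨h1, h2⟩)]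
  have : ∀ U ∈ S.powerset,
      (∑ T ∈ S.powerset.filter (fun T => U ⊆ T), (-1:ℤ)^(S.card - T.card) * g U)
        = (if U = S then 1 else 0) * g U := by
    intro U hU
    rw [← Finset.sum_mul, aux_inner S U (mem_powerset.mp hU)]
  rw [Finset.sum_congr rfl this]
  simp

section counting

variable {V : Type*} [Fintype V] [DecidableEq V] {r : ℕ} (χ : V → Fin r)

lemma cardA (n : ℕ) (hbal : ∀ c : Fin r, (Finset.univ.filter (fun v => χ v = c)).card = n / r)
    (S : Finset (Fin r)) :
    (Finset.univ.filter (fun v => χ v ∈ S)).card = (n / r) * S.card := by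
  have : Finset.univ.filter (fun v => χ v ∈ S)
      = S.biUnion (fun c => Finset.univ.filter (fun v => χ v = c)) := by
    ext v; simp [mem_biUnion]
  rw [this, Finset.card_biUnion]
  · rw [Finset.sum_congr rfl (fun c _ => hbal c), Finset.sum_const, smul_eq_mul, mul_comm]
  · intro c _ c' _ hcc'
    simp only [Finset.disjoint_filter]
    intro v _ h1 h2
    exact hcc' (h1.symm.trans h2)

lemma cardH (n k : ℕ)
    (hbal : ∀ c : Fin r, (Finset.univ.filter (fun v => χ v = c)).card = n / r)
    (S : Finset (Fin r)) :
    ((((Finset.univ : Finset V).powersetCard k).filter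
        (fun e => e.image χ ⊆ S)).card) = ((n / r) * S.card).choose k := by
  have heq : (((Finset.univ : Finset V).powersetCard k).filter (fun e => e.image χ ⊆ S))
      = (Finset.univ.filter (fun v => χ v ∈ S)).powersetCard k := by
    ext e
    simp only [Finset.mem_filter, Finset.mem_powersetCard]
    constructor
    · rintro ⟨⟨-, hk⟩, hsub⟩
      refine ⟨?_, hk⟩
      intro v hv
      exact Finset.mem_filter.mpr ⟨Finset.mem_univ v, hsub (Finset.mem_image_of_mem χ hv)⟩
    · rintro ⟨hsub, hk⟩
      refine ⟨⟨Finset.subset_univ e, hk⟩, ?_⟩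
      intro c hc
      obtain ⟨v, hv, rfl⟩ := Finset.mem_image.mp hc
      exact (Finset.mem_filter.mp (hsub hv)).2
  rw [heq, Finset.card_powersetCard, cardA χ n hbal S]

lemma cardHsum (n k : ℕ) (S : Finset (Fin r)) :
    ((((Finset.univ : Finset V).powersetCard k).filter
        (fun e => e.image χ ⊆ S)).card)
      = ∑ U ∈ S.powerset,
          ((((Finset.univ : Finset V).powersetCard k).filter
            (fun e => e.image χ = U)).card) := by
  have hfib := Finset.card_eq_sum_card_fiberwise
    (s := (((Finset.univ : Finset V).powersetCard k).filter (fun e => e.image χ ⊆ S)))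
    (t := S.powerset) (f := fun e => e.image χ)
    (fun e he => Finset.mem_powerset.mpr (Finset.mem_filter.mp he).2)
  rw [hfib]
  refine Finset.sum_congr rfl (fun U hU => ?_)
  congr 1
  rw [Finset.filter_filter]
  refine Finset.filter_congr (fun e _ => ?_)
  constructor
  · rintro ⟨_, h⟩; exact h
  · rintro rfl; exact ⟨Finset.mem_powerset.mp hU, rfl⟩

end counting
section counting
variable {V : Type*} [Fintype V] [DecidableEq V] {r : ℕ} (χ : V → Fin r)

lemma eval_lemma (a k i : ℕ) (S : Finset (Fin r)) (hS : S.card = i) :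
    ∑ T ∈ S.powerset, (-1:ℤ)^(S.card - T.card) * ((a * T.card).choose k : ℤ)
      = ∑ j ∈ Finset.range (i+1), (-1:ℤ)^j * (i.choose j : ℤ) * ((a*(i-j)).choose k : ℤ) := by
  rw [Finset.sum_powerset, hS]
  have h1 : ∀ j ∈ Finset.range (i+1),
      ∑ T ∈ S.powersetCard j, (-1:ℤ)^(i - T.card) * ((a*T.card).choose k : ℤ)
        = (i.choose j : ℤ) * ((-1:ℤ)^(i-j) * ((a*j).choose k : ℤ)) := by
    intro j hj
    rw [Finset.sum_congr rfl (fun T hT => by rw [(Finset.mem_powersetCard.mp hT).2]),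
      Finset.sum_const, Finset.card_powersetCard, hS, nsmul_eq_mul]
  rw [Finset.sum_congr rfl h1, ← Finset.sum_range_reflect]
  refine Finset.sum_congr rfl fun j hj => ?_
  have hj' : j ≤ i := Nat.lt_succ_iff.mp (Finset.mem_range.mp hj)
  have e1 : i + 1 - 1 - j = i - j := by omega
  have e2 : i - (i - j) = j := by omega
  rw [e1, e2, Nat.choose_symm hj']
  ring

lemma cardExact (k i : ℕ) :
    ((((Finset.univ : Finset V).powersetCard k).filter
        (fun e => (e.image χ).card = i)).card)
      = ∑ S ∈ (Finset.univ : Finset (Fin r)).powersetCard i,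
          ((((Finset.univ : Finset V).powersetCard k).filter
            (fun e => e.image χ = S)).card) := by
  have hfib := Finset.card_eq_sum_card_fiberwise
    (s := (((Finset.univ : Finset V).powersetCard k).filter
        (fun e => (e.image χ).card = i)))
    (t := (Finset.univ : Finset (Fin r)).powersetCard i) (f := fun e => e.image χ)
    (fun e he => Finset.mem_powersetCard.mpr
      ⟨Finset.subset_univ _, (Finset.mem_filter.mp he).2⟩)
  rw [hfib]
  refine Finset.sum_congr rfl (fun S hS => ?_)
  congr 1
  rw [Finset.filter_filter]
  refine Finset.filter_congr (fun e _ => ?_)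
  constructor
  · rintro ⟨-, h⟩; exact h
  · rintro rfl; exact ⟨(Finset.mem_powersetCard.mp hS).2, rfl⟩

end counting

section main
variable {V : Type*} [Fintype V] [DecidableEq V] {r : ℕ} (χ : V → Fin r)

lemma cardG (n k : ℕ)
    (hbal : ∀ c : Fin r, (Finset.univ.filter (fun v => χ v = c)).card = n / r)
    (S : Finset (Fin r)) :
    (((((Finset.univ : Finset V).powersetCard k).filter
        (fun e => e.image χ = S)).card : ℤ))
      = ∑ T ∈ S.powerset, (-1:ℤ)^(S.card - T.card) * (((n/r)*T.card).choose k : ℤ) := by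
  rw [← aux_mobius (fun U => ((((Finset.univ : Finset V).powersetCard k).filter
        (fun e => e.image χ = U)).card : ℤ)) S]
  refine Finset.sum_congr rfl fun T hT => ?_
  congr 1
  rw [← Nat.cast_sum, ← cardHsum χ n k T, cardH χ n k hbal T]

end main

/-- For a balanced `r`-coloring of an `n`-element vertex set (with `r ∣ n`), the number of
`k`-element subsets that are properly `(r,p)` colored (at least `p` distinct colors) equals
`C(n,k) − Σ_{i=1}^{p-1} m(n,k,r,i)` with
`m(n,k,r,i) = C(r,i) Σ_{j=0}^{i} (-1)^j C(i,j) C((n/r)(i-j), k)`. -/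
theorem stmt_2 (n k r p : ℕ) (hn : 0 < n) (hk : 0 < k) (hr : 0 < r) (hp : 1 < p)
    (hrn : r ∣ n) (hpr : p ≤ r) (hpk : p ≤ k) (hkn : k ≤ n)
    (V : Type*) [Fintype V] [DecidableEq V] (hV : Fintype.card V = n)
    (χ : V → Fin r)
    (hbal : ∀ c : Fin r, (Finset.univ.filter (fun v => χ v = c)).card = n / r) :
    ((((Finset.univ : Finset V).powersetCard k).filter
        (fun e : Finset V => p ≤ (e.image χ).card)).card : ℤ) =
      (n.choose k : ℤ) -
        ∑ i ∈ Finset.Icc 1 (p - 1),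
          (r.choose i : ℤ) *
            ∑ j ∈ Finset.range (i + 1),
              (-1 : ℤ) ^ j * (i.choose j : ℤ) * ((((n / r) * (i - j)).choose k : ℕ) : ℤ) := by
  set P := ((Finset.univ : Finset V).powersetCard k) with hP
  have hPcard : P.card = n.choose k := by
    rw [hP, Finset.card_powersetCard, Finset.card_univ, hV]
  -- complement count
  have hsplit := Finset.card_filter_add_card_filter_not
    (s := P) (p := fun e : Finset V => p ≤ (e.image χ).card)
  -- fiberwise decomposition of the complement
  have hfib := Finset.card_eq_sum_card_fiberwise
    (s := P.filter (fun e : Finset V => ¬ p ≤ (e.image χ).card))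
    (t := Finset.Icc 1 (p-1)) (f := fun e : Finset V => (e.image χ).card)
    (by
      intro e he
      obtain ⟨heP, hec⟩ := Finset.mem_filter.mp he
      have hek : e.card = k := (Finset.mem_powersetCard.mp heP).2
      have hne : e.Nonempty := Finset.card_pos.mp (by omega)
      have h1 : 1 ≤ (e.image χ).card := Finset.card_pos.mpr (hne.image χ)
      refine Finset.mem_Icc.mpr ⟨?_, ?_⟩
      · show 1 ≤ (e.image χ).card
        omega
      · show (e.image χ).card ≤ p - 1
        omega)
  have hcompl : (P.filter (fun e : Finset V => ¬ p ≤ (e.image χ).card)).card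
      = ∑ i ∈ Finset.Icc 1 (p-1), (P.filter (fun e => (e.image χ).card = i)).card := by
    rw [hfib]
    refine Finset.sum_congr rfl (fun i hi => ?_)
    congr 1
    rw [Finset.filter_filter]
    refine Finset.filter_congr (fun e _ => ?_)
    have hi' := Finset.mem_Icc.mp hi
    constructor
    · rintro ⟨-, h⟩; exact h
    · intro h; exact ⟨by omega, h⟩
  -- each fiber count
  have hfiber : ∀ i ∈ Finset.Icc 1 (p-1),
      ((P.filter (fun e => (e.image χ).card = i)).card : ℤ)
        = (r.choose i : ℤ) *
            ∑ j ∈ Finset.range (i + 1),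
              (-1 : ℤ) ^ j * (i.choose j : ℤ) * ((((n / r) * (i - j)).choose k : ℕ) : ℤ) := by
    intro i hi
    rw [hP, cardExact χ k i, Nat.cast_sum]
    have : ∀ S ∈ (Finset.univ : Finset (Fin r)).powersetCard i,
        (((((Finset.univ : Finset V).powersetCard k).filter
          (fun e => e.image χ = S)).card : ℤ))
          = ∑ j ∈ Finset.range (i + 1),
              (-1 : ℤ) ^ j * (i.choose j : ℤ) * ((((n / r) * (i - j)).choose k : ℕ) : ℤ) := by
      intro S hS
      rw [cardG χ n k hbal S, eval_lemma (n/r) k i S (Finset.mem_powersetCard.mp hS).2]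
    rw [Finset.sum_congr rfl this, Finset.sum_const, Finset.card_powersetCard,
      Finset.card_univ, Fintype.card_fin, nsmul_eq_mul]
  -- assemble
  have : ((P.filter (fun e : Finset V => p ≤ (e.image χ).card)).card : ℤ)
      = (P.card : ℤ) - ((P.filter (fun e : Finset V => ¬ p ≤ (e.image χ).card)).card : ℤ) := by
    rw [eq_sub_iff_add_eq]
    exact_mod_cast hsplit
  rw [this, hPcard, hcompl, Nat.cast_sum, Finset.sum_congr rfl hfiber]
end

section
/- Let n, k, r, p be positive integers with r dividing n, 1 < p ≤ r, and p ≤ k ≤ n, and let V be an n-element vertex set. For every r-coloring χ of V and every balanced r-coloring χ₀ of V, the number of k-element subsets of V properly (r,p) colored by χ is at most the number of k-element subsets of V properly (r,p) colored by χ₀. In particular, the maximum over all r-colorings of the number of properly (r,p) colored k-element subsets is attained by a coloring that splits V into r equal-sized parts. -/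
/-!
Moving a vertex `v` from a colour class to a strictly smaller class `j` never decreases the number
of properly coloured `k`-sets. The sets that lose properness are the `k`-sets through `v` that
contain no other vertex of `v`'s old colour, meet class `j`, and see exactly `p - 1` colours off
`v`. Sending class `j` injectively into the old class of `v` (avoiding `v`) maps these sets
injectively onto sets that gain properness. As the count depends only on the sizes of the colour
classes, moving vertices from classes larger than `n / r` to classes smaller than `n / r` reaches a
balanced colouring without ever decreasing the count.
-/

open Finset Function

section
variable {ι : Type*} {s : Finset ι} {P Q : ι → Prop} [DecidablePred P] [DecidablePred Q]

lemma Finset.card_filter_le_card_filter_of_and_not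
    (h : #{x ∈ s | P x ∧ ¬Q x} ≤ #{x ∈ s | Q x ∧ ¬P x}) : #{x ∈ s | P x} ≤ #{x ∈ s | Q x} := by
  rw [← card_filter_add_card_filter_not (s := {x ∈ s | P x}) Q,
    ← card_filter_add_card_filter_not (s := {x ∈ s | Q x}) P]
  simp only [filter_filter]
  rw [filter_congr fun x _ => and_comm (a := Q x)]
  omega

end

section Coloring

variable {V α : Type*} [DecidableEq α]

lemma le_card_insert_and_not_le_card_insert_iff (S : Finset α) (i j : α) (p : ℕ) :
    (p ≤ #(insert i S) ∧ ¬p ≤ #(insert j S)) ↔ #S + 1 = p ∧ i ∉ S ∧ j ∈ S := by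
  by_cases hi : i ∈ S <;> by_cases hj : j ∈ S <;> simp [hi, hj, card_insert_of_notMem] <;> omega

lemma image_ite_eq_insert_erase (S : Finset α) {i j : α} (hj : j ∈ S) :
    S.image (fun c => if c = j then i else c) = insert i (S.erase j) := by
  ext c
  simp only [mem_image, mem_insert, mem_erase]
  constructor
  · rintro ⟨d, hd, rfl⟩
    split_ifs with h <;> simp_all
  · rintro (rfl | ⟨hcj, hc⟩)
    · exact ⟨j, hj, by simp⟩
    · exact ⟨c, hc, by simp [hcj]⟩

section

variable [DecidableEq V]

lemma image_eq_insert_image_erase (χ : V → α) {v : V} {e : Finset V} (hv : v ∈ e) :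
    e.image χ = insert (χ v) ((e.erase v).image χ) := by
  rw [← image_insert, insert_erase hv]

lemma erase_image_eq_image_erase {W : Type*} [DecidableEq W] {g : V → W} {v : V} {w : W}
    (hg : ∀ u, g u = w ↔ u = v) (e : Finset V) : (e.image g).erase w = (e.erase v).image g := by
  ext u
  simp only [mem_erase, mem_image]
  grind

lemma le_card_image_and_not_le_card_image_iff {χ χ' : V → α} {v : V} (h : ∀ u ≠ v, χ' u = χ u)
    (e : Finset V) (p : ℕ) :
    (p ≤ #(e.image χ) ∧ ¬p ≤ #(e.image χ')) ↔
      v ∈ e ∧ #((e.erase v).image χ) + 1 = p ∧ χ v ∉ (e.erase v).image χ ∧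
        χ' v ∈ (e.erase v).image χ := by
  by_cases hv : v ∈ e
  · have hS : (e.erase v).image χ' = (e.erase v).image χ :=
      image_congr fun u hu => h u (ne_of_mem_erase hu)
    rw [image_eq_insert_image_erase χ hv, image_eq_insert_image_erase χ' hv, hS,
      le_card_insert_and_not_le_card_insert_iff]
    simp [hv]
  · have he : e.image χ' = e.image χ := image_congr fun u hu => h u (ne_of_mem_of_not_mem hu hv)
    simp [hv, he]

end

variable [Fintype V]

def properCount (χ : V → α) (k p : ℕ) : ℕ :=
  #{e ∈ powersetCard k univ | p ≤ #(e.image χ)}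

lemma properCount_comp_equiv {W : Type*} [Fintype W] (χ : W → α) (σ : V ≃ W) (k p : ℕ) :
    properCount (χ ∘ σ) k p = properCount χ k p := by
  classical
  refine card_nbij' (·.map σ.toEmbedding) (·.map σ.symm.toEmbedding) ?_ ?_ ?_ ?_
  · intro e he
    simp only [coe_filter, Set.mem_ofPred_eq, mem_powersetCard_univ, card_map] at he ⊢
    simpa [map_eq_image, image_image] using he
  · intro e he
    simp only [coe_filter, Set.mem_ofPred_eq, mem_powersetCard_univ, card_map] at he ⊢
    simpa [map_eq_image, image_image, comp_def] using he
  · intro e _; simp [map_map]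
  · intro e _; simp [map_map]

lemma properCount_eq_of_card_fiber_eq {χ χ' : V → α} (k p : ℕ)
    (h : ∀ c, #{v | χ v = c} = #{v | χ' v = c}) : properCount χ k p = properCount χ' k p := by
  have hcard c : Fintype.card {v // χ v = c} = Fintype.card {v // χ' v = c} := by
    simpa only [Fintype.card_subtype] using h c
  let σ := Equiv.ofFiberEquiv fun c => Fintype.equivOfCardEq (hcard c)
  have hσ : χ' ∘ σ = χ := funext (Equiv.ofFiberEquiv_map _)
  rw [← hσ, properCount_comp_equiv]

variable [DecidableEq V]

lemma exists_map_fiber_into_fiber (χ : V → α) {v : V} {j : α} (hj : χ v ≠ j)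
    (hlt : #{u | χ u = j} < #{u | χ u = χ v}) :
    ∃ g : V → V, (∀ u, χ (g u) = if χ u = j then χ v else χ u) ∧ (∀ u, g u = v ↔ u = v) ∧
      Set.InjOn g {u | χ u ≠ χ v ∨ u = v} := by
  have hcard : Fintype.card {u // χ u = j} ≤ Fintype.card {u // χ u = χ v ∧ u ≠ v} := by
    have : #{u | χ u = χ v ∧ u ≠ v} = #{u | χ u = χ v} - 1 := by
      rw [← filter_filter, filter_ne', card_erase_of_mem (by simp)]
    simp only [Fintype.card_subtype, this]
    omega
  obtain ⟨emb⟩ := Function.Embedding.nonempty_of_card_le hcard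
  refine ⟨fun u => if h : χ u = j then emb ⟨u, h⟩ else u, fun u => ?_, fun u => ?_, ?_⟩
  · by_cases h : χ u = j
    · simp [h, (emb ⟨u, h⟩).2.1]
    · simp [h]
  · by_cases h : χ u = j
    · simp only [h, dif_pos]
      exact iff_of_false (emb ⟨u, h⟩).2.2 (by rintro rfl; exact hj h)
    · simp [h]
  · rintro a ha b hb hab
    simp only at hab
    split_ifs at hab with h₁ h₂ h₂
    · simpa using emb.injective (Subtype.ext hab)
    · have := (emb ⟨a, h₁⟩).2
      grind
    · have := (emb ⟨b, h₂⟩).2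
      grind
    · exact hab

lemma properCount_le_properCount_update (χ : V → α) (k p : ℕ) {v : V} {j : α} (hj : χ v ≠ j)
    (hlt : #{u | χ u = j} < #{u | χ u = χ v}) :
    properCount χ k p ≤ properCount (update χ v j) k p := by
  obtain ⟨g, hχg, hgv, hg⟩ := exists_map_fiber_into_fiber χ hj hlt
  have hagree : ∀ u ≠ v, update χ v j u = χ u := fun u hu => update_of_ne hu j χ
  have hloss := le_card_image_and_not_le_card_image_iff hagree
  have hgain := le_card_image_and_not_le_card_image_iff fun u hu => (hagree u hu).symm
  simp only [update_self] at hloss hgain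
  apply card_filter_le_card_filter_of_and_not
  have hD : ∀ e : Finset V, p ≤ #(e.image χ) ∧ ¬p ≤ #(e.image (update χ v j)) →
      (e : Set V) ⊆ {u | χ u ≠ χ v ∨ u = v} := by
    intro e he u hu
    rw [hloss] at he
    simp only [Set.mem_ofPred_eq]
    by_contra! hu'
    exact he.2.2.1 (mem_image.2 ⟨u, mem_erase.2 ⟨hu'.2, hu⟩, hu'.1⟩)
  refine card_le_card_of_injOn (·.image g) (fun e he => ?_) fun e₁ he₁ e₂ he₂ h => ?_
  · have heD := hD e (mem_filter.1 he).2
    simp only [coe_filter, Set.mem_ofPred_eq, mem_powersetCard_univ] at he ⊢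
    rw [hloss] at he
    rw [hgain]
    obtain ⟨hk, hv, hp, hiS, hjS⟩ := he
    set S := (e.erase v).image χ
    have hS : ((e.image g).erase v).image (update χ v j) = insert (χ v) (S.erase j) := by
      rw [image_congr fun u hu => hagree u (ne_of_mem_erase hu),
        erase_image_eq_image_erase hgv, image_image,
        show χ ∘ g = (fun c => if c = j then χ v else c) ∘ χ from funext hχg, ← image_image,
        image_ite_eq_insert_erase S hjS]
    have hiS' : χ v ∉ S.erase j := fun h => hiS (mem_of_mem_erase h)
    rw [hS, card_insert_of_notMem hiS', card_erase_of_mem hjS]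
    have hSpos := card_pos.2 ⟨j, hjS⟩
    exact ⟨(card_image_of_injOn (hg.mono heD)).trans hk, mem_image.2 ⟨v, hv, (hgv v).2 rfl⟩,
      by omega, by simp [hj.symm], mem_insert_self _ _⟩
  · have hD₁ := hD e₁ (mem_filter.1 he₁).2
    have hD₂ := hD e₂ (mem_filter.1 he₂).2
    refine coe_injective <| (hg.image_eq_image_iff hD₁ hD₂).1 ?_
    simpa using congrArg ((↑) : Finset V → Set V) h

lemma filter_update_eq_self (χ : V → α) (v : V) (j : α) :
    univ.filter (fun u => update χ v j u = j) = insert v (univ.filter fun u => χ u = j) := by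
  ext u
  by_cases hu : u = v <;> simp [hu]

lemma filter_update_eq_of_ne (χ : V → α) (v : V) {j c : α} (hc : c ≠ j) :
    univ.filter (fun u => update χ v j u = c) = (univ.filter fun u => χ u = c).erase v := by
  ext u
  by_cases hu : u = v <;> simp [hu, hc.symm]

lemma properCount_le_of_card_fiber_eq [Fintype α] (χ₀ : V → α) {m : ℕ}
    (hbal : ∀ c, #{v | χ₀ v = c} = m) (χ : V → α) (k p : ℕ) :
    properCount χ k p ≤ properCount χ₀ k p := by
  induction hN : ∑ c, (#{v | χ v = c} - m) using Nat.strong_induction_on generalizing χ with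
  | _ N ih =>
  have hsum : ∑ c, #{v | χ v = c} = ∑ _c : α, m := by
    rw [← card_eq_sum_card_fiberwise (by simp), sum_congr rfl fun c _ => (hbal c).symm,
      ← card_eq_sum_card_fiberwise (by simp)]
  by_cases hi : ∃ i, m < #{v | χ v = i}
  · obtain ⟨i, hi⟩ := hi
    obtain ⟨j, hj⟩ : ∃ j, #{v | χ v = j} < m := by
      by_contra! h
      have := sum_lt_sum (fun c _ => h c) ⟨i, mem_univ i, hi⟩
      omega
    obtain ⟨v, hv⟩ := card_pos.1 (by omega : 0 < #{v | χ v = i})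
    obtain rfl : χ v = i := (mem_filter.1 hv).2
    have hvj : χ v ≠ j := by
      rintro h
      rw [h] at hi
      omega
    refine (properCount_le_properCount_update χ k p hvj (by omega)).trans (ih _ ?_ _ rfl)
    rw [← hN]
    refine sum_lt_sum (fun c _ => ?_) ⟨χ v, mem_univ _, ?_⟩
    · by_cases hc : c = j
      · subst hc
        rw [filter_update_eq_self, card_insert_of_notMem (by simp [hvj])]
        omega
      · rw [filter_update_eq_of_ne χ v hc, card_erase_eq_ite]
        split_ifs <;> omega
    · rw [filter_update_eq_of_ne χ v hvj, card_erase_of_mem (by simp)]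
      omega
  · push Not at hi
    refine (properCount_eq_of_card_fiber_eq k p fun c => ?_).le
    rw [hbal, (sum_eq_sum_iff_of_le fun c _ => hi c).1 hsum c (mem_univ c)]

end Coloring

theorem stmt_3_general (n k r p : ℕ)
    (V : Type*) [Fintype V] [DecidableEq V]
    (χ χ₀ : V → Fin r)
    (hbal : ∀ c : Fin r, (Finset.univ.filter (fun v => χ₀ v = c)).card = n / r) :
    (((Finset.univ : Finset V).powersetCard k).filter
        (fun e : Finset V => p ≤ (e.image χ).card)).card ≤
      (((Finset.univ : Finset V).powersetCard k).filter
        (fun e : Finset V => p ≤ (e.image χ₀).card)).card :=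
  properCount_le_of_card_fiber_eq χ₀ hbal χ k p

/-- With `r ∣ n`, every balanced `r`-coloring maximizes, over all `r`-colorings, the number of
properly `(r,p)` colored `k`-element subsets. -/
theorem stmt_3 (n k r p : ℕ) (hn : 0 < n) (hk : 0 < k) (hr : 0 < r) (hp : 1 < p)
    (hrn : r ∣ n) (hpr : p ≤ r) (hpk : p ≤ k) (hkn : k ≤ n)
    (V : Type*) [Fintype V] [DecidableEq V] (hV : Fintype.card V = n)
    (χ χ₀ : V → Fin r)
    (hbal : ∀ c : Fin r, (Finset.univ.filter (fun v => χ₀ v = c)).card = n / r) :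
    (((Finset.univ : Finset V).powersetCard k).filter
        (fun e : Finset V => p ≤ (e.image χ).card)).card ≤
      (((Finset.univ : Finset V).powersetCard k).filter
        (fun e : Finset V => p ≤ (e.image χ₀).card)).card :=
  stmt_3_general n k r p V χ χ₀ hbal
end

section
/- Let n, k, r, p be positive integers with 1 < p ≤ r and p ≤ k ≤ n, and set n₁ = ⌊n/r⌋·r. For every r-coloring χ of an n-element vertex set V, the number of k-element subsets of V properly (r,p) colored by χ is at most C(n,k) − Σ_{i=1}^{p−1} m(n₁,k,r,i), where m(n₁,k,r,i) = C(r,i) · Σ_{j=0}^{i} (-1)^j · C(i,j) · C((n₁/r)·(i−j), k), and C(a,b) denotes the binomial coefficient (with C(a,b) = 0 when a < b). -/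
/-!
A `k`-set is properly coloured iff it does not have at most `t = p - 1` colours, so it suffices to
show that at least `∑_{i=1}^{t} m(n₁,k,r,i)` of the `k`-sets have at most `t` colours. Moving a
vertex `v` from a colour class to a strictly smaller one never increases that number: sending the
smaller class injectively into the larger one minus `v` (and fixing everything else) turns each
`k`-set that gains the property into one that loses it. Repeating such moves, every class ends up
with at least `q = ⌊n/r⌋` vertices. Then choose `q` vertices from each class: by
inclusion–exclusion, the `k`-subsets of their union with at most `t` colours number exactly the sum.
-/

open Finset Function

section

variable {V κ : Type*} [DecidableEq κ]

theorem filter_image_subset_powersetCard (W : Finset V) (χ : V → κ) (S : Finset κ) (k : ℕ) :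
    {e ∈ W.powersetCard k | e.image χ ⊆ S} = {x ∈ W | χ x ∈ S}.powersetCard k := by
  ext e
  simp only [mem_filter, mem_powersetCard, subset_iff]
  grind

theorem card_filter_mem_eq_sum (W : Finset V) (χ : V → κ) (S : Finset κ) :
    #{x ∈ W | χ x ∈ S} = ∑ c ∈ S, #{x ∈ W | χ x = c} := by
  rw [card_eq_sum_card_fiberwise (s := {x ∈ W | χ x ∈ S}) (t := S)
    fun x hx ↦ (mem_filter.1 hx).2]
  refine sum_congr rfl fun c _ ↦ ?_
  rw [filter_filter]
  exact congrArg card (filter_congr fun x _ ↦ by grind)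

theorem image_image_eq_map_image {β : Type*} [DecidableEq β] {s : Finset V} {f : V → β}
    {ψ : β → κ} {χ : V → κ} {τ : κ ≃ κ} (h : ∀ x ∈ s, ψ (f x) = τ (χ x)) :
    (s.image f).image ψ = (s.image χ).map τ.toEmbedding := by
  rw [map_eq_image, image_image, image_image]
  exact image_congr h

/-- Inclusion–exclusion count of the `k`-subsets of a union of `i` disjoint `q`-sets that meet all
of them; `m(n₁,k,r,i) = C(r,i) * spanningCount (n₁/r) k i`. -/
def spanningCount (q k i : ℕ) : ℤ :=
  ∑ j ∈ range (i + 1), (-1 : ℤ) ^ j * (i.choose j : ℤ) * (((q * (i - j)).choose k : ℕ) : ℤ)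

variable [Fintype V]

def fewColorSets (χ : V → κ) (k t : ℕ) : Finset (Finset V) :=
  {e ∈ univ.powersetCard k | #(e.image χ) ≤ t}

variable [DecidableEq V]

theorem card_filter_image_eq_sum_powerset (W : Finset V) (χ : V → κ) (T : Finset κ) (k : ℕ) :
    (#{e ∈ W.powersetCard k | e.image χ = T} : ℤ) =
      ∑ U ∈ T.powerset, (-1) ^ #U * ((#{x ∈ W | χ x ∈ T \ U}).choose k : ℤ) := by
  let missing (c : κ) : Finset (Finset V) := {e | c ∉ e.image χ}
  have key := inclusion_exclusion_sum_inf_compl T missing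
    (fun e ↦ if e ∈ W.powersetCard k ∧ e.image χ ⊆ T then (1 : ℤ) else 0)
  simp only [sum_boole, zsmul_eq_mul, Int.cast_id] at key
  have hT : {e ∈ W.powersetCard k | e.image χ = T} =
      {e ∈ T.inf fun c ↦ (missing c)ᶜ | e ∈ W.powersetCard k ∧ e.image χ ⊆ T} := by
    ext e
    simp [missing, mem_inf, subset_antisymm_iff, subset_iff]
    grind
  rw [hT, key]
  refine sum_congr rfl fun U _ ↦ ?_
  rw [← card_powersetCard, ← filter_image_subset_powersetCard]
  congr 3
  ext e
  simp [missing, mem_inf, subset_iff]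
  grind

theorem card_filter_image_eq_spanningCount {W : Finset V} {χ : V → κ} {q : ℕ}
    (hW : ∀ c, #{x ∈ W | χ x = c} = q) (T : Finset κ) (k : ℕ) :
    (#{e ∈ W.powersetCard k | e.image χ = T} : ℤ) = spanningCount q k #T := by
  have hsize (U : Finset κ) (hU : U ⊆ T) : #{x ∈ W | χ x ∈ T \ U} = q * (#T - #U) := by
    rw [card_filter_mem_eq_sum, sum_congr rfl fun c _ ↦ hW c, sum_const, card_sdiff_of_subset hU,
      smul_eq_mul, mul_comm]
  rw [card_filter_image_eq_sum_powerset, spanningCount,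
    sum_congr rfl fun U hU ↦ by rw [hsize U (mem_powerset.1 hU)],
    sum_powerset_apply_card fun m ↦ (-1) ^ m * (((q * (#T - m)).choose k : ℕ) : ℤ)]
  refine sum_congr rfl fun j _ ↦ ?_
  rw [nsmul_eq_mul]
  ring

theorem card_filter_card_image_le_eq_sum [Fintype κ] {W : Finset V} {χ : V → κ} {q : ℕ}
    (hW : ∀ c, #{x ∈ W | χ x = c} = q) (k t : ℕ) :
    (#{e ∈ W.powersetCard k | #(e.image χ) ≤ t} : ℤ) =
      ∑ i ∈ range (t + 1), ((Fintype.card κ).choose i : ℤ) * spanningCount q k i := by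
  rw [card_eq_sum_card_fiberwise (s := {e ∈ W.powersetCard k | #(e.image χ) ≤ t})
    (f := fun e ↦ #(e.image χ)) (t := range (t + 1))
    fun e he ↦ mem_range.2 (Nat.lt_succ_of_le (mem_filter.1 he).2)]
  push_cast
  refine sum_congr rfl fun i hi ↦ ?_
  have hfiber : {e ∈ {e ∈ W.powersetCard k | #(e.image χ) ≤ t} | #(e.image χ) = i} =
      {e ∈ W.powersetCard k | e.image χ ∈ powersetCard i univ} := by
    ext e
    simp only [mem_filter, mem_powersetCard, subset_univ, true_and, mem_range] at hi ⊢
    grind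
  rw [hfiber, card_eq_sum_card_fiberwise
    (s := {e ∈ W.powersetCard k | e.image χ ∈ powersetCard i univ})
    (f := fun e ↦ e.image χ) (t := powersetCard i univ) fun e he ↦ (mem_filter.1 he).2]
  push_cast
  rw [sum_congr rfl fun T hT ↦ ?_, sum_const, card_powersetCard, card_univ, nsmul_eq_mul]
  have hT' : {e ∈ {e ∈ W.powersetCard k | e.image χ ∈ powersetCard i univ} | e.image χ = T} =
      {e ∈ W.powersetCard k | e.image χ = T} := by
    rw [filter_filter]
    exact filter_congr fun e _ ↦ by grind
  rw [hT', card_filter_image_eq_spanningCount hW, (mem_powersetCard.1 hT).2]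

theorem exists_card_fiber_eq {χ : V → κ} {q : ℕ} (hq : ∀ c, q ≤ #{x | χ x = c}) :
    ∃ W : Finset V, ∀ c, #{x ∈ W | χ x = c} = q := by
  choose C hCsub hCcard using fun c ↦ exists_subset_card_eq (hq c)
  refine ⟨({x | x ∈ C (χ x)} : Finset V), fun c ↦ ?_⟩
  convert hCcard c using 2
  ext x
  simp only [mem_filter, mem_univ, true_and]
  constructor
  · rintro ⟨hx, rfl⟩
    exact hx
  · intro hx
    have hxc := (mem_filter.1 (hCsub c hx)).2
    exact ⟨hxc ▸ hx, hxc⟩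

theorem mem_fewColorSets_update_sdiff {χ : V → κ} {v : V} {b : κ} {k t : ℕ} {e : Finset V} :
    e ∈ fewColorSets (update χ v b) k t \ fewColorSets χ k t ↔
      #e = k ∧ v ∈ e ∧ #((e.erase v).image χ) = t ∧
        b ∈ (e.erase v).image χ ∧ χ v ∉ (e.erase v).image χ := by
  by_cases hv : v ∈ e
  · have hχ : e.image χ = insert (χ v) ((e.erase v).image χ) := by
      rw [← image_insert, insert_erase hv]
    have hχ' : e.image (update χ v b) = insert b ((e.erase v).image χ) := by
      conv_lhs => rw [← insert_erase hv]
      rw [image_insert, update_self]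
      exact congrArg _ (image_congr fun x hx ↦ update_of_ne (ne_of_mem_erase hx) _ _)
    simp only [fewColorSets, mem_sdiff, mem_filter, mem_powersetCard, subset_univ, true_and,
      hχ, hχ', card_insert_eq_ite, hv]
    grind
  · have : e.image (update χ v b) = e.image χ :=
      image_congr fun x hx ↦ update_of_ne (ne_of_mem_of_not_mem hx hv) _ _
    simp [fewColorSets, this, hv]

theorem subset_of_mem_fewColorSets_update_sdiff {χ : V → κ} {v : V} {b : κ} {k t : ℕ}
    {e : Finset V} (he : e ∈ fewColorSets (update χ v b) k t \ fewColorSets χ k t) :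
    e ⊆ ({x | x = v ∨ χ x ≠ χ v} : Finset V) := by
  obtain ⟨-, -, -, -, hvI⟩ := mem_fewColorSets_update_sdiff.1 he
  intro x hx
  simp only [mem_filter, mem_univ, true_and]
  by_cases hxv : x = v
  · exact Or.inl hxv
  · exact Or.inr fun h ↦ hvI (h ▸ mem_image_of_mem χ (mem_erase.2 ⟨hxv, hx⟩))

theorem exists_injOn_swap_colors {χ : V → κ} {v : V} {b : κ}
    (hlt : #{x | χ x = b} < #{x | χ x = χ v}) :
    ∃ ι : V → V, ι v = v ∧ Set.InjOn ι ({x | x = v ∨ χ x ≠ χ v} : Finset V) ∧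
      ∀ x, χ x ≠ χ v → χ (ι x) = Equiv.swap (χ v) b (χ x) := by
  set B : Finset V := {x | χ x = b}
  have hb : χ v ≠ b := fun h ↦ (h ▸ hlt).false
  obtain ⟨emb⟩ : Nonempty (B ↪ ({x | χ x = χ v} : Finset V).erase v) := by
    apply Function.Embedding.nonempty_of_card_le
    rw [Fintype.card_coe, Fintype.card_coe, card_erase_of_mem (by simp)]
    omega
  have hemb (x) (h) : χ (emb ⟨x, h⟩) = χ v ∧ (emb ⟨x, h⟩ : V) ≠ v := by
    have := (emb ⟨x, h⟩).2
    simp only [mem_erase, mem_filter, mem_univ, true_and] at this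
    exact ⟨this.2, this.1⟩
  refine ⟨fun x ↦ if h : x ∈ B then emb ⟨x, h⟩ else x, by simp [B, hb], ?_, fun x hx ↦ ?_⟩
  · rintro x hx y hy hxy
    simp only [coe_filter, mem_univ, true_and, Set.mem_ofPred_eq] at hx hy
    by_cases hxB : x ∈ B <;> by_cases hyB : y ∈ B <;>
      simp only [hxB, hyB, dite_true, dite_false] at hxy
    · simpa using emb.injective (Subtype.ext hxy)
    · have := hemb x hxB; grind
    · have := hemb y hyB; grind
    · exact hxy
  · by_cases h : χ x = b
    · simp [B, h, (hemb x (by simpa [B] using h)).1]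
    · simp [B, h, Equiv.swap_apply_of_ne_of_ne hx h]

theorem image_mem_fewColorSets_sdiff_update {χ : V → κ} {v : V} {b : κ} {k t : ℕ} {ι : V → V}
    (hιv : ι v = v) (hιinj : Set.InjOn ι ({x | x = v ∨ χ x ≠ χ v} : Finset V))
    (hιχ : ∀ x, χ x ≠ χ v → χ (ι x) = Equiv.swap (χ v) b (χ x)) {e : Finset V}
    (he : e ∈ fewColorSets (update χ v b) k t \ fewColorSets χ k t) :
    e.image ι ∈ fewColorSets χ k t \ fewColorSets (update χ v b) k t := by
  have hs := subset_of_mem_fewColorSets_update_sdiff he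
  obtain ⟨hk, hv, hI, hbI, hvI⟩ := mem_fewColorSets_update_sdiff.1 he
  have hg (x) (hx : x ∈ e.erase v) : χ x ≠ χ v := fun h ↦ hvI (h ▸ mem_image_of_mem χ hx)
  have hvι : v ∉ (e.erase v).image ι := by
    intro h
    obtain ⟨x, hx, hxv⟩ := mem_image.1 h
    exact ne_of_mem_erase hx (hιinj (by simp [hg x hx]) (by simp) (hxv.trans hιv.symm))
  have herase : (e.image ι).erase v = (e.erase v).image ι := by
    rw [← erase_insert hvι, ← hιv, ← image_insert, hιv, insert_erase hv]
  have hχ' : ((e.erase v).image ι).image (update χ v b) = ((e.erase v).image ι).image χ :=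
    image_congr fun x hx ↦ update_of_ne (ne_of_mem_of_not_mem hx hvι) _ _
  -- `χ` is itself an update of `update χ v b`, so the same characterisation applies with the roles
  -- of the colours `χ v` and `b` exchanged.
  have hχ : update (update χ v b) v (χ v) = χ := by simp
  nth_rewrite 1 [← hχ]
  rw [mem_fewColorSets_update_sdiff, herase, update_self, hχ',
    image_image_eq_map_image fun x hx ↦ hιχ x (hg x hx), card_map, mem_map_equiv, mem_map_equiv,
    Equiv.symm_swap, Equiv.swap_apply_left, Equiv.swap_apply_right,
    card_image_of_injOn (hιinj.mono (coe_subset.2 hs))]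
  exact ⟨hk, mem_image.2 ⟨v, hv, hιv⟩, hI, hbI, hvI⟩

theorem card_fewColorSets_update_le {χ : V → κ} {v : V} {b : κ}
    (hlt : #{x | χ x = b} < #{x | χ x = χ v}) (k t : ℕ) :
    #(fewColorSets (update χ v b) k t) ≤ #(fewColorSets χ k t) := by
  obtain ⟨ι, hιv, hιinj, hιχ⟩ := exists_injOn_swap_colors hlt
  rw [← card_sdiff_le_card_sdiff_iff]
  refine card_le_card_of_injOn (image ι)
    (fun e he ↦ image_mem_fewColorSets_sdiff_update hιv hιinj hιχ he) fun e₁ he₁ e₂ he₂ ↦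
      image_injOn_powerset_of_injOn hιinj
        (mem_powerset.2 (subset_of_mem_fewColorSets_update_sdiff he₁))
        (mem_powerset.2 (subset_of_mem_fewColorSets_update_sdiff he₂))

theorem card_fiber_update_add (χ : V → κ) (v : V) (b c : κ) :
    #{x | update χ v b x = c} + (if χ v = c then 1 else 0) =
      #{x | χ x = c} + (if b = c then 1 else 0) := by
  simp only [card_filter]
  rw [← add_sum_erase _ _ (mem_univ v), ← add_sum_erase _ _ (mem_univ v), update_self,
    sum_congr rfl fun x hx ↦ by rw [update_of_ne (ne_of_mem_erase hx)]]
  omega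

theorem sum_spanningCount_le_card_fewColorSets [Fintype κ] {q k : ℕ} (hk : 0 < k)
    (hq : q * Fintype.card κ ≤ Fintype.card V) (χ : V → κ) (t : ℕ) :
    ∑ i ∈ Icc 1 t, ((Fintype.card κ).choose i : ℤ) * spanningCount q k i ≤
      #(fewColorSets χ k t) := by
  induction hd : ∑ c, (q - #{x | χ x = c}) using Nat.strong_induction_on generalizing χ with
  | _ d ih =>
  by_cases hbal : ∀ c, q ≤ #{x | χ x = c}
  · obtain ⟨W, hW⟩ := exists_card_fiber_eq hbal
    have hrange : range (t + 1) = insert 0 (Icc 1 t) := by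
      ext i
      simp only [mem_range, mem_insert, mem_Icc]
      omega
    have hzero : spanningCount q k 0 = 0 := by
      simp [spanningCount, Nat.choose_eq_zero_of_lt hk]
    calc _ = (#{e ∈ W.powersetCard k | #(e.image χ) ≤ t} : ℤ) := by
          rw [card_filter_card_image_le_eq_sum hW, hrange, sum_insert (by simp), hzero, mul_zero,
            zero_add]
      _ ≤ #(fewColorSets χ k t) := by
          exact_mod_cast card_le_card (filter_subset_filter _ (powersetCard_mono (subset_univ W)))
  obtain ⟨b, hb⟩ : ∃ b, #{x | χ x = b} < q := by simpa using hbal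
  obtain ⟨a, ha⟩ : ∃ a, q < #{x | χ x = a} := by
    by_contra! hle
    have hlt : ∑ c, #{x | χ x = c} < ∑ _c : κ, q :=
      sum_lt_sum (fun c _ ↦ hle c) ⟨b, mem_univ b, hb⟩
    rw [← card_eq_sum_card_fiberwise fun x _ ↦ mem_univ (χ x), sum_const, card_univ, card_univ,
      smul_eq_mul, mul_comm] at hlt
    omega
  obtain ⟨v, rfl⟩ : ∃ v, χ v = a := by
    obtain ⟨v, hv⟩ := card_pos.1 (Nat.zero_lt_of_lt ha)
    exact ⟨v, (mem_filter.1 hv).2⟩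
  have hlt : #{x | χ x = b} < #{x | χ x = χ v} := hb.trans ha
  have hdecr : ∑ c, (q - #{x | update χ v b x = c}) < d := by
    rw [← hd]
    refine sum_lt_sum (fun c _ ↦ ?_) ⟨b, mem_univ b, ?_⟩
    · have := card_fiber_update_add χ v b c
      split_ifs at this <;> subst_vars <;> omega
    · have hvb : χ v ≠ b := fun h ↦ (h ▸ hlt).false
      have := card_fiber_update_add χ v b b
      rw [if_neg hvb, if_pos rfl] at this
      omega
  calc _ ≤ (#(fewColorSets (update χ v b) k t) : ℤ) := ih _ hdecr _ rfl
    _ ≤ #(fewColorSets χ k t) := by exact_mod_cast card_fewColorSets_update_le hlt k t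

end

theorem stmt_4_general (n k r p : ℕ) (hk : 0 < k) (hr : 0 < r) (hp : 1 < p)
    (V : Type*) [Fintype V] [DecidableEq V] (hV : Fintype.card V = n)
    (χ : V → Fin r) :
    ((((Finset.univ : Finset V).powersetCard k).filter
        (fun e : Finset V => p ≤ (e.image χ).card)).card : ℤ) ≤
      (n.choose k : ℤ) -
        ∑ i ∈ Finset.Icc 1 (p - 1),
          (r.choose i : ℤ) *
            ∑ j ∈ Finset.range (i + 1),
              (-1 : ℤ) ^ j * (i.choose j : ℤ) *
                ((((n / r * r) / r * (i - j)).choose k : ℕ) : ℤ) := by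
  have hq : n / r * Fintype.card (Fin r) ≤ Fintype.card V := by
    rw [Fintype.card_fin, hV]
    exact Nat.div_mul_le_self n r
  have hlow := sum_spanningCount_le_card_fewColorSets hk hq χ (p - 1)
  have hsplit : #{e ∈ univ.powersetCard k | p ≤ #(e.image χ)} + #(fewColorSets χ k (p - 1)) =
      n.choose k := by
    rw [fewColorSets, filter_congr fun e _ ↦ by rw [← not_lt, Nat.lt_iff_le_pred (by omega)],
      add_comm, card_filter_add_card_filter_not, card_powersetCard, card_univ, hV]
  rw [Nat.mul_div_cancel _ hr]
  simp only [Fintype.card_fin, spanningCount] at hlow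
  rw [← hsplit, Nat.cast_add]
  linarith

/-- Upper bound: with `n₁ = ⌊n/r⌋·r`, for every `r`-coloring of an `n`-element vertex set,
the number of properly `(r,p)` colored `k`-element subsets is at most
`C(n,k) − Σ_{i=1}^{p-1} m(n₁,k,r,i)`. -/
theorem stmt_4 (n k r p : ℕ) (hn : 0 < n) (hk : 0 < k) (hr : 0 < r) (hp : 1 < p)
    (hpr : p ≤ r) (hpk : p ≤ k) (hkn : k ≤ n)
    (V : Type*) [Fintype V] [DecidableEq V] (hV : Fintype.card V = n)
    (χ : V → Fin r) :
    ((((Finset.univ : Finset V).powersetCard k).filter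
        (fun e : Finset V => p ≤ (e.image χ).card)).card : ℤ) ≤
      (n.choose k : ℤ) -
        ∑ i ∈ Finset.Icc 1 (p - 1),
          (r.choose i : ℤ) *
            ∑ j ∈ Finset.range (i + 1),
              (-1 : ℤ) ^ j * (i.choose j : ℤ) *
                ((((n / r * r) / r * (i - j)).choose k : ℕ) : ℤ) :=
  stmt_4_general n k r p hk hr hp V hV χ
end

section
/- Let n, k, r, p be positive integers with 1 < p ≤ r and p ≤ k ≤ n, and set n₂ = ⌈n/r⌉·r. There exists an r-coloring χ of an n-element vertex set V such that the number of k-element subsets of V properly (r,p) colored by χ is at least C(n,k) − Σ_{i=1}^{p−1} m(n₂,k,r,i), where m(n₂,k,r,i) = C(r,i) · Σ_{j=0}^{i} (-1)^j · C(i,j) · C((n₂/r)·(i−j), k), and C(a,b) denotes the binomial coefficient (with C(a,b) = 0 when a < b). -/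
/-!
Embed the `n` vertices into the grid `Fin r × Fin ⌈n/r⌉` and colour each vertex by its row.
A `k`-set that sees fewer than `p` colours is then a `k`-subset of the grid whose rows form a set
`S` of `i < p` rows, all of which it meets; it is nonempty since `k > 0`, so `1 ≤ i`. For a fixed
`S` such subsets are counted by inclusion–exclusion over the rows of `S` they miss, and there are
`C(r, i)` choices of `S`.
-/

open Finset

/-- The number of `k`-subsets of an `i × q` grid meeting all `i` rows, by inclusion–exclusion
over the `j` rows that are missed; the paper's `m(n₂, k, r, i)` is `C(r, i)` times it, with
`q = n₂ / r`. -/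
def rowCoveringCount (i q k : ℕ) : ℤ :=
  ∑ j ∈ range (i + 1), (-1 : ℤ) ^ j * (i.choose j : ℤ) * ((q * (i - j)).choose k : ℤ)

lemma filter_subset_powersetCard {γ : Type*} [DecidableEq γ] {X T : Finset γ} (hT : T ⊆ X)
    (k : ℕ) :
    {e ∈ X.powersetCard k | e ⊆ T} = T.powersetCard k := by
  ext e
  simp only [mem_filter, mem_powersetCard]
  exact ⟨fun h => ⟨h.2, h.1.2⟩, fun h => ⟨⟨h.1.trans hT, h.2⟩, h.1⟩⟩

section Grid

variable {α β : Type*} [DecidableEq α] [Fintype β]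

lemma subset_sdiff_product_iff {S J : Finset α} {e : Finset (α × β)}
    (he : e ⊆ S ×ˢ univ) (hJ : J ⊆ S) :
    e ⊆ (S \ J) ×ˢ univ ↔ J ⊆ S \ e.image Prod.fst := by
  constructor
  · intro h a ha
    refine mem_sdiff.2 ⟨hJ ha, fun hae => ?_⟩
    obtain ⟨x, hx, rfl⟩ := mem_image.1 hae
    exact (mem_sdiff.1 (mem_product.1 (h hx)).1).2 ha
  · intro h x hx
    refine mem_product.2
      ⟨mem_sdiff.2 ⟨(mem_product.1 (he hx)).1, fun hxJ => ?_⟩, mem_univ _⟩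
    exact (mem_sdiff.1 (h hxJ)).2 (mem_image_of_mem _ hx)

lemma ite_image_fst_eq_sum_powerset [DecidableEq β] {S : Finset α} {e : Finset (α × β)}
    (he : e ⊆ S ×ˢ univ) :
    (if e.image Prod.fst = S then (1 : ℤ) else 0) =
      ∑ J ∈ S.powerset, if e ⊆ (S \ J) ×ˢ univ then (-1 : ℤ) ^ #J else 0 := by
  have himage : e.image Prod.fst ⊆ S := fun a ha => by
    obtain ⟨x, hx, rfl⟩ := mem_image.1 ha
    exact (mem_product.1 (he hx)).1
  have hfilter :
      {J ∈ S.powerset | e ⊆ (S \ J) ×ˢ univ} = (S \ e.image Prod.fst).powerset := by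
    ext J
    simp only [mem_filter, mem_powerset]
    refine ⟨fun h => (subset_sdiff_product_iff he h.1).1 h.2, fun h => ?_⟩
    have hJ := h.trans sdiff_subset
    exact ⟨hJ, (subset_sdiff_product_iff he hJ).2 h⟩
  rw [← sum_filter, hfilter, sum_powerset_neg_one_pow_card]
  refine if_congr ?_ rfl rfl
  rw [sdiff_eq_empty_iff_subset]
  exact ⟨fun h => h ▸ subset_rfl, himage.antisymm⟩

theorem card_filter_image_fst_eq [DecidableEq β] (S : Finset α) (k : ℕ) :
    (#{e ∈ (S ×ˢ (univ : Finset β)).powersetCard k | e.image Prod.fst = S} : ℤ) =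
      rowCoveringCount #S (Fintype.card β) k := by
  calc (#{e ∈ (S ×ˢ (univ : Finset β)).powersetCard k | e.image Prod.fst = S} : ℤ)
      = ∑ e ∈ (S ×ˢ (univ : Finset β)).powersetCard k,
          ∑ J ∈ S.powerset, if e ⊆ (S \ J) ×ˢ univ then (-1 : ℤ) ^ #J else 0 := by
        rw [card_filter, Nat.cast_sum]
        refine sum_congr rfl fun e he => ?_
        rw [← ite_image_fst_eq_sum_powerset (mem_powersetCard.1 he).1]
        split_ifs <;> rfl
    _ = ∑ J ∈ S.powerset, (-1 : ℤ) ^ #J * ((Fintype.card β * (#S - #J)).choose k : ℤ) := by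
        rw [sum_comm]
        refine sum_congr rfl fun J hJ => ?_
        rw [← sum_filter, sum_const, filter_subset_powersetCard
          (product_subset_product_left sdiff_subset), card_powersetCard, card_product,
          card_univ, card_sdiff_of_subset (mem_powerset.1 hJ), nsmul_eq_mul, mul_comm,
          mul_comm (#S - #J)]
    _ = rowCoveringCount #S (Fintype.card β) k := by
        rw [rowCoveringCount, sum_powerset_apply_card
          (fun j => (-1 : ℤ) ^ j * ((Fintype.card β * (#S - j)).choose k : ℤ))]
        refine sum_congr rfl fun j _ => ?_
        rw [nsmul_eq_mul]
        ring

end Grid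

section Coloring

variable {V α β : Type*} [Fintype V] [DecidableEq α] [Fintype β] [DecidableEq β]

lemma card_filter_image_eq_le (ψ : V ↪ α × β) (S : Finset α) (k : ℕ) :
    #{e ∈ (univ : Finset V).powersetCard k | e.image (Prod.fst ∘ ψ) = S} ≤
      #{e ∈ (S ×ˢ (univ : Finset β)).powersetCard k | e.image Prod.fst = S} := by
  refine card_le_card_of_injOn (·.map ψ) (fun e he => ?_) fun e _ e' _ h => map_injective ψ h
  simp only [coe_filter, Set.mem_ofPred_eq, mem_powersetCard, card_map] at he ⊢
  obtain ⟨⟨-, hcard⟩, himage⟩ := he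
  rw [map_eq_image, image_image]
  refine ⟨⟨fun x hx => ?_, hcard⟩, himage⟩
  obtain ⟨v, hv, rfl⟩ := mem_image.1 hx
  exact mem_product.2 ⟨himage ▸ mem_image_of_mem _ hv, mem_univ _⟩

theorem card_filter_card_image_lt_le [Fintype α] (ψ : V ↪ α × β) {k : ℕ} (hk : 0 < k)
    (p : ℕ) :
    (#{e ∈ (univ : Finset V).powersetCard k | #(e.image (Prod.fst ∘ ψ)) < p} : ℤ) ≤
      ∑ i ∈ Icc 1 (p - 1), ((Fintype.card α).choose i : ℤ) *
        rowCoveringCount i (Fintype.card β) k := by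
  set χ := Prod.fst ∘ ψ
  set B := {e ∈ (univ : Finset V).powersetCard k | #(e.image χ) < p}
  have hB : ∀ e ∈ B, #(e.image χ) ∈ Icc 1 (p - 1) := by
    intro e he
    obtain ⟨he, hlt⟩ := mem_filter.1 he
    have hne : e.Nonempty := card_pos.1 ((mem_powersetCard.1 he).2 ▸ hk)
    exact mem_Icc.2 ⟨card_pos.2 (hne.image _), by omega⟩
  have hfiber : ∀ i, ∀ e ∈ {e ∈ B | #(e.image χ) = i},
      e.image χ ∈ (univ : Finset α).powersetCard i :=
    fun i e he => mem_powersetCard_univ.2 (mem_filter.1 he).2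
  calc (#B : ℤ)
      = ∑ i ∈ Icc 1 (p - 1), ∑ S ∈ (univ : Finset α).powersetCard i,
          (#{e ∈ {e ∈ B | #(e.image χ) = i} | e.image χ = S} : ℤ) := by
        rw [card_eq_sum_card_fiberwise hB]
        push_cast
        exact sum_congr rfl fun i _ => by rw [card_eq_sum_card_fiberwise (hfiber i)]; push_cast; rfl
    _ ≤ ∑ i ∈ Icc 1 (p - 1), ∑ S ∈ (univ : Finset α).powersetCard i,
          (#{e ∈ (S ×ˢ (univ : Finset β)).powersetCard k | e.image Prod.fst = S} : ℤ) := by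
        gcongr with i _ S
        have hsub : {e ∈ B | #(e.image χ) = i} ⊆ (univ : Finset V).powersetCard k :=
          (filter_subset _ _).trans (filter_subset _ _)
        exact (card_le_card (filter_subset_filter _ hsub)).trans (card_filter_image_eq_le ψ S k)
    _ = ∑ i ∈ Icc 1 (p - 1), ((Fintype.card α).choose i : ℤ) *
          rowCoveringCount i (Fintype.card β) k := by
        refine sum_congr rfl fun i _ => ?_
        rw [sum_congr rfl fun S hS => by
          rw [card_filter_image_fst_eq, mem_powersetCard_univ.1 hS]]
        rw [sum_const, card_powersetCard, card_univ, nsmul_eq_mul]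

end Coloring

theorem stmt_5_general (n k r p : ℕ) (hk : 0 < k) (hr : 0 < r)
    (V : Type*) [Fintype V] (hV : Fintype.card V = n) :
    ∃ χ : V → Fin r,
      (n.choose k : ℤ) -
          ∑ i ∈ Finset.Icc 1 (p - 1),
            (r.choose i : ℤ) *
              ∑ j ∈ Finset.range (i + 1),
                (-1 : ℤ) ^ j * (i.choose j : ℤ) *
                  (((((n + r - 1) / r * r) / r * (i - j)).choose k : ℕ) : ℤ) ≤
        ((((Finset.univ : Finset V).powersetCard k).filter
            (fun e : Finset V => p ≤ (e.image χ).card)).card : ℤ) := by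
  set q := (n + r - 1) / r
  have hnq : n ≤ r * q := by
    have : n + r - 1 < q * r + r := Nat.lt_div_mul_add hr
    rw [mul_comm]
    omega
  obtain ⟨ψ⟩ : Nonempty (V ↪ Fin r × Fin q) :=
    Function.Embedding.nonempty_of_card_le (by simpa [hV] using hnq)
  refine ⟨Prod.fst ∘ ψ, ?_⟩
  have hsplit := card_filter_add_card_filter_not (s := (univ : Finset V).powersetCard k)
    (fun e => p ≤ #(e.image (Prod.fst ∘ ψ)))
  simp only [not_le, card_powersetCard, card_univ, hV] at hsplit
  have hbad := card_filter_card_image_lt_le ψ hk p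
  simp only [Fintype.card_fin, rowCoveringCount] at hbad
  rw [Nat.mul_div_cancel _ hr]
  push_cast [← hsplit]
  linarith

/-- Lower bound: with `n₂ = ⌈n/r⌉·r`, there is an `r`-coloring of an `n`-element vertex set for
which the number of properly `(r,p)` colored `k`-element subsets is at least
`C(n,k) − Σ_{i=1}^{p-1} m(n₂,k,r,i)`. -/
theorem stmt_5 (n k r p : ℕ) (hn : 0 < n) (hk : 0 < k) (hr : 0 < r) (hp : 1 < p)
    (hpr : p ≤ r) (hpk : p ≤ k) (hkn : k ≤ n)
    (V : Type*) [Fintype V] [DecidableEq V] (hV : Fintype.card V = n) :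
    ∃ χ : V → Fin r,
      (n.choose k : ℤ) -
          ∑ i ∈ Finset.Icc 1 (p - 1),
            (r.choose i : ℤ) *
              ∑ j ∈ Finset.range (i + 1),
                (-1 : ℤ) ^ j * (i.choose j : ℤ) *
                  (((((n + r - 1) / r * r) / r * (i - j)).choose k : ℕ) : ℤ) ≤
        ((((Finset.univ : Finset V).powersetCard k).filter
            (fun e : Finset V => p ≤ (e.image χ).card)).card : ℤ) :=
  stmt_5_general n k r p hk hr V hV
end

section
/- Let n and k be positive integers with 2 ≤ k ≤ n and 2 dividing n. The maximum, over all 2-colorings χ of an n-element vertex set V, of the number of k-element subsets of V on which χ takes both colors (i.e., the non-monochromatic k-subsets) equals C(n,k) − 2·C(n/2, k), where C(a,b) denotes the binomial coefficient (with C(a,b) = 0 when a < b). -/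
/-!
A `k`-set fails to be non-monochromatic exactly when it lies inside one colour class, so a
colouring with classes of sizes `a + b = n` has `C(n,k) - C(a,k) - C(b,k)` non-monochromatic
`k`-sets. Since `j ↦ C(j,k)` is convex (Pascal's rule reduces this to monotonicity of
`j ↦ C(j,k-1)`), `C(a,k) + C(b,k)` is smallest for `a = b = n/2`.
-/

open Finset

namespace Nat

theorem choose_succ_add_choose_le {a b : ℕ} (k : ℕ) (hab : a ≤ b) :
    (a + 1).choose k + b.choose k ≤ a.choose k + (b + 1).choose k := by
  cases k with
  | zero => simp
  | succ j =>
    have := choose_le_choose j hab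
    rw [choose_succ_succ', choose_succ_succ']
    omega

theorem two_mul_choose_le_choose_sub_add_choose_add {m d : ℕ} (k : ℕ) (hd : d ≤ m) :
    2 * m.choose k ≤ (m - d).choose k + (m + d).choose k := by
  induction d with
  | zero => simp [two_mul]
  | succ d ih =>
    have step := choose_succ_add_choose_le k (show m - (d + 1) ≤ m + d by omega)
    rw [show m - (d + 1) + 1 = m - d by omega] at step
    have := ih (by omega)
    rw [← add_assoc]
    omega

theorem two_mul_choose_le_choose_add_choose {a b m : ℕ} (k : ℕ) (h : a + b = 2 * m) :
    2 * m.choose k ≤ a.choose k + b.choose k := by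
  wlog hab : a ≤ b generalizing a b
  · rw [add_comm]
    exact this (by omega) (by omega)
  have := two_mul_choose_le_choose_sub_add_choose_add k (show m - a ≤ m by omega)
  rwa [show m - (m - a) = a by omega, show m + (m - a) = b by omega] at this

end Nat

section Colorings

variable {V α : Type*} [Fintype V]

theorem card_filter_image_card_le_one [DecidableEq V] [Fintype α] [DecidableEq α]
    (χ : V → α) {k : ℕ} (hk : k ≠ 0) :
    #{e ∈ (univ : Finset V).powersetCard k | #(e.image χ) ≤ 1} =
      ∑ c, (#{v | χ v = c}).choose k := by
  have hsplit : {e ∈ (univ : Finset V).powersetCard k | #(e.image χ) ≤ 1} =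
      univ.biUnion fun c => ({v | χ v = c} : Finset V).powersetCard k := by
    ext e
    simp only [mem_filter, mem_powersetCard, subset_univ, true_and, mem_biUnion, mem_univ]
    constructor
    · rintro ⟨he, hle⟩
      obtain ⟨v, hv⟩ : e.Nonempty := by rw [← card_pos]; omega
      refine ⟨χ v, fun u hu => mem_filter.2 ⟨mem_univ u, ?_⟩, he⟩
      exact card_le_one.1 hle _ (mem_image_of_mem χ hu) _ (mem_image_of_mem χ hv)
    · rintro ⟨c, hc, he⟩
      refine ⟨he, card_le_one.2 fun x hx y hy => ?_⟩
      obtain ⟨u, hu, rfl⟩ := mem_image.1 hx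
      obtain ⟨w, hw, rfl⟩ := mem_image.1 hy
      rw [(mem_filter.1 (hc hu)).2, (mem_filter.1 (hc hw)).2]
  have hdisj : ((univ : Finset α) : Set α).PairwiseDisjoint
      fun c => ({v | χ v = c} : Finset V).powersetCard k := by
    intro c _ d _ hcd
    refine disjoint_left.2 fun e hc hd => ?_
    rw [mem_powersetCard] at hc hd
    obtain ⟨v, hv⟩ : e.Nonempty := by rw [← card_pos]; omega
    exact hcd ((mem_filter.1 (hc.1 hv)).2.symm.trans (mem_filter.1 (hd.1 hv)).2)
  rw [hsplit, card_biUnion hdisj]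
  simp only [card_powersetCard]

theorem card_filter_image_card_eq_two_add [DecidableEq V] (χ : V → Fin 2) {k : ℕ}
    (hk : k ≠ 0) :
    #{e ∈ (univ : Finset V).powersetCard k | #(e.image χ) = 2} +
        ((#{v | χ v = 0}).choose k + (#{v | χ v = 1}).choose k) =
      (Fintype.card V).choose k := by
  have hmono := card_filter_image_card_le_one χ hk
  rw [Fin.sum_univ_two] at hmono
  have hnot : {e ∈ (univ : Finset V).powersetCard k | ¬#(e.image χ) = 2} =
      {e ∈ (univ : Finset V).powersetCard k | #(e.image χ) ≤ 1} := by
    refine filter_congr fun e _ => ?_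
    have : #(e.image χ) ≤ 2 := (card_le_univ _).trans_eq (Fintype.card_fin 2)
    omega
  rw [← hmono, ← hnot, card_filter_add_card_filter_not, card_powersetCard, card_univ]

theorem card_fiber_zero_add_card_fiber_one (χ : V → Fin 2) :
    #{v | χ v = 0} + #{v | χ v = 1} = Fintype.card V := by
  rw [← Fin.sum_univ_two (fun c => #{v | χ v = c}), ← card_univ]
  exact (card_eq_sum_card_fiberwise fun _ _ => mem_univ _).symm

end Colorings

theorem stmt_10_general (n k : ℕ) (hk : 2 ≤ k) (h2n : 2 ∣ n)
    (V : Type*) [Fintype V] [DecidableEq V] (hV : Fintype.card V = n) :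
    (∃ χ : V → Fin 2,
        (((((Finset.univ : Finset V).powersetCard k).filter
            (fun e : Finset V => (e.image χ).card = 2)).card : ℤ)) =
          (n.choose k : ℤ) - 2 * ((n / 2).choose k : ℤ)) ∧
      (∀ χ : V → Fin 2,
        (((((Finset.univ : Finset V).powersetCard k).filter
            (fun e : Finset V => (e.image χ).card = 2)).card : ℤ)) ≤
          (n.choose k : ℤ) - 2 * ((n / 2).choose k : ℤ)) := by
  obtain ⟨m, rfl⟩ := h2n
  rw [Nat.mul_div_cancel_left m two_pos]
  have hk0 : k ≠ 0 := by omega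
  refine ⟨?_, fun χ => ?_⟩
  · obtain ⟨S, -, hS⟩ := exists_subset_card_eq (s := (univ : Finset V)) (n := m)
      (by rw [card_univ, hV]; omega)
    let χ : V → Fin 2 := fun v => if v ∈ S then 0 else 1
    have hfiber : #{v | χ v = 0} = m := by
      rw [← hS]; congr 1; ext v; by_cases hv : v ∈ S <;> simp [χ, hv]
    have hsizes := card_fiber_zero_add_card_fiber_one χ
    have hcount := card_filter_image_card_eq_two_add χ hk0
    refine ⟨χ, ?_⟩
    rw [hfiber, show #{v | χ v = 1} = m by omega, hV] at hcount
    rw [← hcount]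
    push_cast
    ring
  · have hcount := card_filter_image_card_eq_two_add χ hk0
    have hconv := Nat.two_mul_choose_le_choose_add_choose k
      ((card_fiber_zero_add_card_fiber_one χ).trans hV)
    rw [hV] at hcount
    rw [← hcount]
    push_cast
    omega

/-- With `2 ∣ n` and `2 ≤ k ≤ n`, the maximum over all `2`-colorings of an `n`-element vertex
set of the number of non-monochromatic `k`-element subsets equals `C(n,k) − 2·C(n/2,k)`. -/
theorem stmt_10 (n k : ℕ) (hk : 2 ≤ k) (hkn : k ≤ n) (h2n : 2 ∣ n)
    (V : Type*) [Fintype V] [DecidableEq V] (hV : Fintype.card V = n) :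
    (∃ χ : V → Fin 2,
        (((((Finset.univ : Finset V).powersetCard k).filter
            (fun e : Finset V => (e.image χ).card = 2)).card : ℤ)) =
          (n.choose k : ℤ) - 2 * ((n / 2).choose k : ℤ)) ∧
      (∀ χ : V → Fin 2,
        (((((Finset.univ : Finset V).powersetCard k).filter
            (fun e : Finset V => (e.image χ).card = 2)).card : ℤ)) ≤
          (n.choose k : ℤ) - 2 * ((n / 2).choose k : ℤ)) :=
  stmt_10_general n k hk h2n V hV
end
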